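/- arXiv:1910.11287 — 4 statements merged into one kernel-verified Lean document; each statement's English description precedes it below -/
import Mathlib

section
/- Let K be a compact connected subgroup of GL_n(ℝ). Then K is algebraic: there exist finitely many real polynomials P₁, …, P_h in the n² matrix entries such that K = {X ∈ M_n(ℝ) : P_i(X) = 0 for all i = 1, …, h}. In particular, K is definable in the real ordered field (ℝ; 0, 1, +, ·, <). -/
/-!
If `X ∉ ρ(G)` for a continuous representation `ρ` of a compact group, the compact sets `ρ(G)` and
`X ρ(G)` are disjoint, so by Urysohn and Stone–Weierstrass some polynomial `p` is `< 1/3` on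
`ρ(G)` and `> 2/3` on `X ρ(G)`. Its Haar average `q(Y) = ∫ p(Y ρ(g)) dg` is again a polynomial
(integrate the coefficients), it is constant on `ρ(G)` by left invariance, and `q(X)` exceeds that
constant. So `ρ(G)` is the zero locus of its vanishing ideal, which is finitely generated by
Hilbert's basis theorem.
-/

open MvPolynomial MeasureTheory Topology Function

namespace MvPolynomial

theorem exists_forall_abs_eval_sub_lt {σ : Type*} {s : Set (σ → ℝ)} (hs : IsCompact s)
    {f : (σ → ℝ) → ℝ} (hf : ContinuousOn f s) {ε : ℝ} (hε : 0 < ε) :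
    ∃ p : MvPolynomial σ ℝ, ∀ x ∈ s, |eval x p - f x| < ε := by
  have := isCompact_iff_compactSpace.mp hs
  let Ψ : MvPolynomial σ ℝ →ₐ[ℝ] C(s, ℝ) :=
    aeval fun i ↦ ⟨fun x ↦ (x : σ → ℝ) i, (continuous_apply i).comp continuous_subtype_val⟩
  have hΨ (p : MvPolynomial σ ℝ) (x : s) : Ψ p x = eval (x : σ → ℝ) p := by
    induction p using MvPolynomial.induction_on with
    | C a => simp [Ψ]
    | add p q hp hq => simp [hp, hq]
    | mul_X p i hp => simp [Ψ, ← hp]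
  have hsep : Ψ.range.SeparatesPoints := by
    intro x y hxy
    obtain ⟨i, hi⟩ := Function.ne_iff.mp (Subtype.coe_ne_coe.mpr hxy)
    exact ⟨_, ⟨Ψ (X i), ⟨X i, rfl⟩, rfl⟩, by simpa [hΨ] using hi⟩
  obtain ⟨⟨_, p, rfl⟩, hp⟩ := ContinuousMap.exists_mem_subalgebra_near_continuous_of_separatesPoints
    Ψ.range hsep (s.domRestrict f) hf.domRestrict ε hε
  exact ⟨p, fun x hx ↦ by simpa [hΨ, Real.norm_eq_abs] using hp ⟨x, hx⟩⟩

theorem exists_separating_of_isCompact_of_disjoint {σ : Type*} [Finite σ] {A B : Set (σ → ℝ)}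
    (hA : IsCompact A) (hB : IsCompact B) (hAB : Disjoint A B) :
    ∃ p : MvPolynomial σ ℝ, (∀ x ∈ A, eval x p < 1 / 3) ∧ ∀ x ∈ B, 2 / 3 < eval x p := by
  obtain ⟨f, hfA, hfB, -⟩ := exists_continuous_zero_one_of_isCompact hA hB.isClosed hAB
  obtain ⟨p, hp⟩ := exists_forall_abs_eval_sub_lt (hA.union hB) f.continuous.continuousOn
    (ε := 1 / 3) (by norm_num)
  refine ⟨p, fun x hx ↦ ?_, fun x hx ↦ ?_⟩
  · have := (abs_lt.mp (hp x (.inl hx))).2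
    rw [hfA hx] at this
    simpa using this
  · have := (abs_lt.mp (hp x (.inr hx))).1
    rw [hfB hx] at this
    simp at this
    linarith

theorem eval_map_eval_sumRingEquiv {R σ τ : Type*} [CommSemiring R] (P : MvPolynomial (σ ⊕ τ) R)
    (y : σ → R) (z : τ → R) :
    eval y (map (eval z) (sumRingEquiv R σ τ P)) = eval (Sum.elim y z) P := by
  induction P using MvPolynomial.induction_on with
  | C a => simp [sumRingEquiv_C]
  | add p q hp hq => simp [hp, hq]
  | mul_X p i hp => cases i <;> simp [hp, sumRingEquiv_X_inl, sumRingEquiv_X_inr]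

theorem exists_eval_eq_integral_eval_sumElim {G : Type*} [MeasurableSpace G] (μ : Measure G)
    {σ τ : Type*} (P : MvPolynomial (σ ⊕ τ) ℝ) (w : G → τ → ℝ)
    (hw : ∀ c : MvPolynomial τ ℝ, Integrable (fun g ↦ eval (w g) c) μ) :
    ∃ Q : MvPolynomial σ ℝ, ∀ y, eval y Q = ∫ g, eval (Sum.elim y (w g)) P ∂μ := by
  -- view `P` as a polynomial in the `σ`-variables with coefficients in `MvPolynomial τ ℝ`
  set F := sumRingEquiv ℝ σ τ P
  refine ⟨∑ d ∈ F.support, monomial d (∫ g, eval (w g) (F.coeff d) ∂μ), fun y ↦ ?_⟩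
  simp_rw [← eval_map_eval_sumRingEquiv, eval_map, eval₂_eq]
  rw [integral_finsetSum _ fun d _ ↦ (hw _).mul_const _, map_sum]
  refine Finset.sum_congr rfl fun d _ ↦ ?_
  rw [integral_mul_const, eval_monomial]
  rfl

theorem zeroLocus_vanishingIdeal_eq {k σ : Type*} [Field k] {S : Set (σ → k)}
    (hS : ∀ x ∉ S, ∃ p ∈ vanishingIdeal k S, eval x p ≠ 0) :
    zeroLocus k (vanishingIdeal k S) = S := by
  refine le_antisymm (fun x hx ↦ ?_) (zeroLocus_vanishingIdeal_le S)
  by_contra hxS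
  obtain ⟨p, hp, hpx⟩ := hS x hxS
  exact hpx (by simpa using hx p hp)

theorem exists_fin_zeroLocus_eq {k σ : Type*} [Field k] [Finite σ]
    (I : Ideal (MvPolynomial σ k)) :
    ∃ (h : ℕ) (P : Fin h → MvPolynomial σ k), zeroLocus k I = {x | ∀ i, eval x (P i) = 0} := by
  obtain ⟨h, P, hP⟩ := Submodule.fg_iff_exists_fin_generating_family.mp (IsNoetherian.noetherian I)
  refine ⟨h, P, Set.ext fun x ↦ ?_⟩
  change I ≤ RingHom.ker (aeval x) ↔ _
  rw [← hP, Ideal.span_le, Set.range_subset_iff]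
  simp

theorem exists_eval_sumElim_eq_eval_mul {R ι : Type*} [CommSemiring R] [Fintype ι]
    (P : MvPolynomial (ι × ι) R) :
    ∃ F : MvPolynomial ((ι × ι) ⊕ (ι × ι)) R, ∀ Y Z : Matrix ι ι R,
      eval (Sum.elim (fun p ↦ Y p.1 p.2) (fun p ↦ Z p.1 p.2)) F =
        eval (fun p ↦ (Y * Z) p.1 p.2) P := by
  refine ⟨bind₁ (fun p ↦ ∑ k, X (.inl (p.1, k)) * X (.inr (k, p.2))) P, fun Y Z ↦ ?_⟩
  rw [← aeval_eq_eval, aeval_bind₁, ← aeval_eq_eval]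
  congr 2
  funext p
  simp [Matrix.mul_apply]

theorem exists_eval_eq_integral_eval_mul {G : Type*} [TopologicalSpace G] [CompactSpace G]
    [MeasurableSpace G] [OpensMeasurableSpace G] (μ : Measure G) [IsFiniteMeasure μ]
    {ι : Type*} [Fintype ι] {w : G → Matrix ι ι ℝ} (hw : Continuous w)
    (P : MvPolynomial (ι × ι) ℝ) :
    ∃ Q : MvPolynomial (ι × ι) ℝ, ∀ Y : Matrix ι ι ℝ,
      eval (fun p ↦ Y p.1 p.2) Q = ∫ g, eval (fun p ↦ (Y * w g) p.1 p.2) P ∂μ := by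
  obtain ⟨F, hF⟩ := exists_eval_sumElim_eq_eval_mul P
  have hint (c : MvPolynomial (ι × ι) ℝ) :
      Integrable (fun g ↦ eval (fun p ↦ w g p.1 p.2) c) μ := by
    refine Continuous.integrable_of_hasCompactSupport ?_ (.of_compactSpace _)
    exact (continuous_eval c).comp (continuous_pi fun p ↦ hw.matrix_elem p.1 p.2)
  obtain ⟨Q, hQ⟩ := exists_eval_eq_integral_eval_sumElim μ F _ hint
  exact ⟨Q, fun Y ↦ by simp only [hQ, hF]⟩

end MvPolynomial

theorem Matrix.uncurry_injective {m n α : Type*} :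
    Injective fun (A : Matrix m n α) (p : m × n) ↦ A p.1 p.2 :=
  (Equiv.curry m n α).symm.injective

theorem Matrix.GeneralLinearGroup.isEmbedding_val {ι 𝕜 : Type*} [Fintype ι] [DecidableEq ι]
    [Field 𝕜] [TopologicalSpace 𝕜] [IsTopologicalDivisionRing 𝕜] :
    IsEmbedding (Units.val : GL ι 𝕜 → Matrix ι ι 𝕜) := by
  refine Units.isEmbedding_val_mk' (fun A hA ↦ ?_) fun u ↦ (Matrix.coe_units_inv u).symm
  refine (continuousAt_matrix_inv A ?_).continuousWithinAt
  rw [Ring.inverse_eq_inv']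
  exact continuousAt_inv₀ ((Matrix.isUnit_iff_isUnit_det A).mp hA).ne_zero

section CompactGroup

variable {G : Type*} [Group G] [TopologicalSpace G] [IsTopologicalGroup G] [CompactSpace G]
  {ι : Type*} [Fintype ι] [DecidableEq ι]

theorem exists_mvPolynomial_separating_of_notMem_range (ρ : G →* Matrix ι ι ℝ) (hρ : Continuous ρ)
    {X : Matrix ι ι ℝ} (hX : X ∉ Set.range ρ) :
    ∃ Q : MvPolynomial (ι × ι) ℝ, (∀ g, eval (fun p ↦ ρ g p.1 p.2) Q = 0) ∧
      eval (fun p ↦ X p.1 p.2) Q ≠ 0 := by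
  let : MeasurableSpace G := borel G
  have : BorelSpace G := ⟨rfl⟩
  let μ : Measure G := Measure.haar
  have hdisj : Disjoint (Set.range fun g p ↦ ρ g p.1 p.2)
      (Set.range fun g (p : ι × ι) ↦ (X * ρ g) p.1 p.2) := by
    refine Set.disjoint_left.mpr ?_
    rintro _ ⟨g, rfl⟩ ⟨h, hgh⟩
    refine hX ⟨g * h⁻¹, ?_⟩
    rw [map_mul, ← Matrix.uncurry_injective hgh, mul_assoc, ← map_mul, mul_inv_cancel, map_one,
      mul_one]
  have hcont (Y : Matrix ι ι ℝ) : Continuous fun g (p : ι × ι) ↦ (Y * ρ g) p.1 p.2 :=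
    continuous_pi fun p ↦ (continuous_const.matrix_mul hρ).matrix_elem p.1 p.2
  obtain ⟨p, hpK, hpXK⟩ := exists_separating_of_isCompact_of_disjoint
    (isCompact_range (continuous_pi fun p ↦ hρ.matrix_elem p.1 p.2)) (isCompact_range (hcont X))
    hdisj
  obtain ⟨q, hq⟩ := exists_eval_eq_integral_eval_mul μ hρ p
  have hint (Y : Matrix ι ι ℝ) : Integrable (fun g ↦ eval (fun p ↦ (Y * ρ g) p.1 p.2) p) μ :=
    ((continuous_eval p).comp (hcont Y)).integrable_of_hasCompactSupport (.of_compactSpace _)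
  set c := ∫ g, eval (fun p ↦ ρ g p.1 p.2) p ∂μ
  have hq_range (k : G) : eval (fun p ↦ ρ k p.1 p.2) q = c := by
    have hmul (g : G) : ρ k * ρ g = ρ (k * g) := (map_mul ρ k g).symm
    simp only [hq, hmul]
    exact (integral_mul_left_eq_self (μ := μ) (fun g ↦ eval (fun p ↦ ρ g p.1 p.2) p) k :)
  have hc : c ≤ ∫ _, 1 / 3 ∂μ :=
    integral_mono (by simpa using hint 1) (integrable_const _) fun g ↦ (hpK _ ⟨g, rfl⟩).le
  have hqX : ∫ _, 2 / 3 ∂μ ≤ eval (fun p ↦ X p.1 p.2) q := by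
    rw [hq]
    exact integral_mono (integrable_const _) (hint X) fun g ↦ (hpXK _ ⟨g, rfl⟩).le
  rw [integral_const, smul_eq_mul] at hc hqX
  have hμ : 0 < μ.real Set.univ := measureReal_univ_pos
  refine ⟨q - C c, fun g ↦ by simp [hq_range], ?_⟩
  simp only [map_sub, eval_C, sub_ne_zero]
  intro h
  linarith

theorem exists_fin_range_eq_setOf_eval_eq_zero (ρ : G →* Matrix ι ι ℝ) (hρ : Continuous ρ) :
    ∃ (h : ℕ) (P : Fin h → MvPolynomial (ι × ι) ℝ),
      Set.range ρ = {X | ∀ i, eval (fun p ↦ X p.1 p.2) (P i) = 0} := by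
  set S : Set (ι × ι → ℝ) := Set.range fun g p ↦ ρ g p.1 p.2
  have hS : zeroLocus ℝ (vanishingIdeal ℝ S) = S := by
    refine zeroLocus_vanishingIdeal_eq fun x hx ↦ ?_
    have hX : Matrix.of (fun i j ↦ x (i, j)) ∉ Set.range ρ := by
      rintro ⟨g, hg⟩
      exact hx ⟨g, by simp [hg]⟩
    obtain ⟨Q, hQρ, hQX⟩ := exists_mvPolynomial_separating_of_notMem_range ρ hρ hX
    exact ⟨Q, by simpa [S] using hQρ, hQX⟩
  obtain ⟨h, P, hP⟩ := exists_fin_zeroLocus_eq (vanishingIdeal ℝ S)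
  refine ⟨h, P, Set.ext fun X ↦ ?_⟩
  have hXS : X ∈ Set.range ρ ↔ (fun p ↦ X p.1 p.2) ∈ S :=
    exists_congr fun g ↦ Matrix.uncurry_injective.eq_iff.symm
  rw [hXS, ← hS, hP]
  rfl

end CompactGroup

theorem compact_connected_subgroup_is_algebraic_general
    (n : ℕ) (K : Subgroup (GL (Fin n) ℝ))
    (hcomp : IsCompact
      ((fun g : GL (Fin n) ℝ => (g : Matrix (Fin n) (Fin n) ℝ)) '' (K : Set (GL (Fin n) ℝ)))) :
    ∃ (h : ℕ) (P : Fin h → MvPolynomial (Fin n × Fin n) ℝ),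
      ((fun g : GL (Fin n) ℝ => (g : Matrix (Fin n) (Fin n) ℝ)) '' (K : Set (GL (Fin n) ℝ))) =
        {X : Matrix (Fin n) (Fin n) ℝ |
          ∀ i, MvPolynomial.eval (fun p : Fin n × Fin n => X p.1 p.2) (P i) = 0} := by
  have : CompactSpace K :=
    isCompact_iff_compactSpace.mp (Matrix.GeneralLinearGroup.isEmbedding_val.isCompact_iff.mpr hcomp)
  obtain ⟨h, P, hP⟩ := exists_fin_range_eq_setOf_eval_eq_zero ((Units.coeHom _).comp K.subtype)
    (Units.continuous_val.comp continuous_subtype_val)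
  refine ⟨h, P, ?_⟩
  rw [← hP]
  ext
  simp

/-- A compact connected subgroup `K` of `GL_n(ℝ)` is algebraic: viewed as a
subset of the matrix space `M_n(ℝ)`, it is the common zero set of finitely many real
polynomials in the `n²` matrix entries. -/
theorem compact_connected_subgroup_is_algebraic
    (n : ℕ) (K : Subgroup (GL (Fin n) ℝ))
    (hcomp : IsCompact
      ((fun g : GL (Fin n) ℝ => (g : Matrix (Fin n) (Fin n) ℝ)) '' (K : Set (GL (Fin n) ℝ))))
    (hconn : IsConnected
      ((fun g : GL (Fin n) ℝ => (g : Matrix (Fin n) (Fin n) ℝ)) '' (K : Set (GL (Fin n) ℝ)))) :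
    ∃ (h : ℕ) (P : Fin h → MvPolynomial (Fin n × Fin n) ℝ),
      ((fun g : GL (Fin n) ℝ => (g : Matrix (Fin n) (Fin n) ℝ)) '' (K : Set (GL (Fin n) ℝ))) =
        {X : Matrix (Fin n) (Fin n) ℝ |
          ∀ i, MvPolynomial.eval (fun p : Fin n × Fin n => X p.1 p.2) (P i) = 0} :=
  compact_connected_subgroup_is_algebraic_general n K hcomp
end

section
/- Let k be a field, 𝔨 a Lie algebra over k, and M a finite-dimensional 𝔨-module such that every Lie submodule of M admits a complementary Lie submodule (M is a semisimple 𝔨-module). Then M is the internal direct sum of the Lie submodule generated by {x • m : x ∈ 𝔨, m ∈ M} (i.e., ⁅𝔨, M⁆) and the maximal trivial submodule M^𝔨 = {m ∈ M : x • m = 0 for all x ∈ 𝔨}. -/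
/-- If `M` is a finite-dimensional semisimple module over a Lie algebra `𝔨`
(every Lie submodule has a complement), then `M` is the internal direct sum of `⁅𝔨, M⁆` (the
submodule spanned by the elements `⁅x, m⁆`) and the maximal trivial submodule
`M^𝔨 = {m | ∀ x, ⁅x, m⁆ = 0}`. -/
theorem semisimple_lie_module_decomposition
    (k : Type*) [Field k] (𝔨 : Type*) [LieRing 𝔨] [LieAlgebra k 𝔨]
    (M : Type*) [AddCommGroup M] [Module k M] [LieRingModule 𝔨 M] [LieModule k 𝔨 M]
    [FiniteDimensional k M]
    (hss : ∀ N : LieSubmodule k 𝔨 M, ∃ N' : LieSubmodule k 𝔨 M, IsCompl N N') :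
    ⁅(⊤ : LieIdeal k 𝔨), (⊤ : LieSubmodule k 𝔨 M)⁆ ⊔ LieModule.maxTrivSubmodule k 𝔨 M = ⊤ ∧
    ⁅(⊤ : LieIdeal k 𝔨), (⊤ : LieSubmodule k 𝔨 M)⁆ ⊓ LieModule.maxTrivSubmodule k 𝔨 M = ⊥ := by
  set C : LieSubmodule k 𝔨 M := ⁅(⊤ : LieIdeal k 𝔨), (⊤ : LieSubmodule k 𝔨 M)⁆ with hC
  set T := LieModule.maxTrivSubmodule k 𝔨 M
  constructor
  · obtain ⟨C', hC'⟩ := hss C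
    have hC'triv : C' ≤ T := by
      intro m hm
      rw [LieModule.mem_maxTrivSubmodule]
      intro x
      have h1 : (⁅x, m⁆ : M) ∈ C' := C'.lie_mem hm
      have h2 : (⁅x, m⁆ : M) ∈ C :=
        LieSubmodule.lie_mem_lie (LieSubmodule.mem_top x) (LieSubmodule.mem_top m)
      have h3 : (⁅x, m⁆ : M) ∈ C ⊓ C' := ⟨h2, h1⟩
      rw [hC'.inf_eq_bot] at h3
      exact h3
    have := hC'.sup_eq_top
    exact le_antisymm le_top (by rw [← this]; exact sup_le_sup_left hC'triv _)
  · obtain ⟨P, hP⟩ := hss (C ⊓ T)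
    have hTtriv : ⁅(⊤ : LieIdeal k 𝔨), C ⊓ T⁆ = ⊥ := by
      rw [eq_bot_iff, ← LieModule.ideal_oper_maxTrivSubmodule_eq_bot k 𝔨 M (⊤ : LieIdeal k 𝔨)]
      exact LieSubmodule.mono_lie_right _ inf_le_right
    have hCP : C ≤ P := by
      calc C = ⁅(⊤ : LieIdeal k 𝔨), (C ⊓ T) ⊔ P⁆ := by rw [hP.sup_eq_top]
        _ = ⁅(⊤ : LieIdeal k 𝔨), C ⊓ T⁆ ⊔ ⁅(⊤ : LieIdeal k 𝔨), P⁆ := LieSubmodule.lie_sup ..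
        _ ≤ ⊥ ⊔ P := sup_le_sup hTtriv.le (LieSubmodule.lie_le_right _ _)
        _ = P := bot_sup_eq _
    have : C ⊓ T ≤ (C ⊓ T) ⊓ P := le_inf le_rfl (le_trans inf_le_left hCP)
    rw [hP.inf_eq_bot] at this
    exact le_bot_iff.mp this
end

section
/- Let G be a topological group with a closed normal subgroup H and a subgroup K such that G = KH and K ∩ H = {e}. For a continuous function f : H → ℝ and g = kh ∈ G (k ∈ K, h ∈ H), define g · f : H → ℝ by (g · f)(x) = f(k⁻¹xkh). Let ℛ(H) be the set of continuous functions f : H → ℝ such that the real span of {h · f : h ∈ H} is finite-dimensional. Then for every f ∈ ℛ(H) and every g ∈ G, the function g · f again belongs to ℛ(H). -/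
/-- `f : H → ℝ` is a representative function: it is continuous and the span of its orbit under
right translations `(h · f)(x) = f(x·h)` is finite-dimensional. -/
def IsRepresentativeFunction {G : Type*} [Group G] [TopologicalSpace G] (H : Subgroup G)
    (f : H → ℝ) : Prop :=
  Continuous f ∧
  FiniteDimensional ℝ (Submodule.span ℝ {g : H → ℝ | ∃ h : H, g = fun x => f (x * h)})

/-!
Conjugation `x ↦ k⁻¹ x k` is a continuous automorphism `φ` of the normal subgroup `H`, and
`g · f = f(· h) ∘ φ`. The orbit of `f(· h)` lies in that of `f`, and since `φ` is
multiplicative, the orbit of `f ∘ φ` lies in the image of the orbit of `f` under the linear map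
`u ↦ u ∘ φ`; either way finite-dimensionality is inherited.
-/

namespace IsRepresentativeFunction

variable {G G' : Type*} [Group G] [TopologicalSpace G] [Group G'] [TopologicalSpace G']
  {H : Subgroup G} {H' : Subgroup G'} {f : H → ℝ}

theorem mul_right [ContinuousMul G] (hf : IsRepresentativeFunction H f) (a : H) :
    IsRepresentativeFunction H fun x => f (x * a) := by
  refine ⟨hf.1.comp ((continuous_subtype_val.mul continuous_const).subtype_mk _), ?_⟩
  have := hf.2
  have hle : Submodule.span ℝ {g : H → ℝ | ∃ b : H, g = fun x => f (x * b * a)} ≤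
      Submodule.span ℝ {g : H → ℝ | ∃ b : H, g = fun x => f (x * b)} := by
    refine Submodule.span_mono ?_
    rintro _ ⟨b, rfl⟩
    exact ⟨b * a, by simp only [mul_assoc]⟩
  exact Submodule.finiteDimensional_of_le hle

theorem comp_monoidHom {F : Type*} [FunLike F H' H] [MonoidHomClass F H' H]
    (hf : IsRepresentativeFunction H f) (φ : F)
    (hφ : Continuous φ) : IsRepresentativeFunction H' (f ∘ φ) := by
  refine ⟨hf.1.comp hφ, ?_⟩
  have := hf.2
  have hle : Submodule.span ℝ {g : H' → ℝ | ∃ b : H', g = fun x => (f ∘ φ) (x * b)} ≤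
      (Submodule.span ℝ {g : H → ℝ | ∃ a : H, g = fun x => f (x * a)}).map
        (LinearMap.funLeft ℝ ℝ φ) := by
    rw [Submodule.span_le]
    rintro _ ⟨b, rfl⟩
    refine ⟨_, Submodule.subset_span ⟨φ b, rfl⟩, ?_⟩
    funext x
    simp [map_mul]
  exact Submodule.finiteDimensional_of_le hle

end IsRepresentativeFunction

theorem MulAut.continuous_conjNormal {G : Type*} [Group G] [TopologicalSpace G]
    [IsTopologicalGroup G] {H : Subgroup G} [H.Normal] (g : G) :
    Continuous (MulAut.conjNormal (H := H) g) :=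
  ((continuous_const.mul continuous_subtype_val).mul continuous_const).subtype_mk _

theorem G_action_preserves_representative_functions_general
    {G : Type*} [Group G] [TopologicalSpace G] [IsTopologicalGroup G]
    (H : Subgroup G) [H.Normal]
    (f : H → ℝ) (hf : IsRepresentativeFunction H f)
    (k : G) (h : G) (hh : h ∈ H)
    (f' : H → ℝ)
    (hf' : ∀ (x y : H), (y : G) = k⁻¹ * ↑x * k * h → f' x = f y) :
    IsRepresentativeFunction H f' := by
  have hf'_eq : f' = (fun y => f (y * ⟨h, hh⟩)) ∘ MulAut.conjNormal (H := H) k⁻¹ := by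
    funext x
    exact hf' x _ (by simp)
  rw [hf'_eq]
  exact (hf.mul_right ⟨h, hh⟩).comp_monoidHom _ (MulAut.continuous_conjNormal k⁻¹)

/-- Let `G = K ⋉ H` be a topological group with `H` a closed normal subgroup
and `K` a subgroup with `G = KH`, `K ∩ H = {e}`.  For `f : H → ℝ` continuous and `g = kh ∈ G`
define `(g · f)(x) = f(k⁻¹xkh)`.  If `f` is a representative function of `H`, then so is
`g · f` (here `f'` is the function satisfying `f' x = f (k⁻¹ x k h)`, the membership
`k⁻¹xkh ∈ H` being automatic from normality of `H`). -/
theorem G_action_preserves_representative_functions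
    {G : Type*} [Group G] [TopologicalSpace G] [IsTopologicalGroup G]
    (H K : Subgroup G) [H.Normal] (hHclosed : IsClosed (H : Set G))
    (hprod : ∀ g : G, ∃ k ∈ K, ∃ h ∈ H, g = k * h) (hint : K ⊓ H = ⊥)
    (f : H → ℝ) (hf : IsRepresentativeFunction H f)
    (k : G) (hk : k ∈ K) (h : G) (hh : h ∈ H)
    (f' : H → ℝ)
    (hf' : ∀ (x y : H), (y : G) = k⁻¹ * ↑x * k * h → f' x = f y) :
    IsRepresentativeFunction H f' :=
  G_action_preserves_representative_functions_general H f hf k h hh f' hf'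
end

section
/- Let S be a topological group whose center Z(S) is finite and such that the quotient S/Z(S) admits an injective continuous group homomorphism into GL(V) for some finite-dimensional real vector space V. Let Λ(S) be the intersection of the kernels of all continuous group homomorphisms from S into GL(W) over all finite-dimensional real vector spaces W (the linearizer of S). Then Λ(S) is contained in Z(S), and S/Λ(S) admits an injective continuous group homomorphism into GL(U) for some finite-dimensional real vector space U. -/
/-!
Composing the faithful representation of `S ⧸ Z(S)` with the projection gives a continuous
representation of `S` with kernel `Z(S)`, hence `Λ(S) ≤ Z(S)`. Each of the finitely many central
elements outside `Λ(S)` is moved by some continuous representation; the block sum of all of these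
with the first one has kernel exactly `Λ(S)`, so it descends to a faithful continuous
representation of `S ⧸ Λ(S)`.
-/

/-- The linearizer `Λ(S)` of a topological group `S`: the intersection of the kernels of all
continuous finite-dimensional real representations of `S` (identifying a finite-dimensional
real vector space with `ℝᵈ` and `GL(W)` with `GL_d(ℝ)`). -/
def linearizer (S : Type*) [Group S] [TopologicalSpace S] : Subgroup S :=
  ⨅ (d : ℕ) (ρ : S →* GL (Fin d) ℝ) (_ : Continuous ρ), ρ.ker

namespace Matrix

variable {m n R : Type*} [Fintype m] [Fintype n] [DecidableEq m] [DecidableEq n] [Semiring R]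

def fromBlocksDiagonalMonoidHom : Matrix m m R × Matrix n n R →* Matrix (m ⊕ n) (m ⊕ n) R where
  toFun p := fromBlocks p.1 0 0 p.2
  map_one' := fromBlocks_one
  map_mul' p q := by simp [fromBlocks_multiply]

lemma fromBlocksDiagonalMonoidHom_injective :
    Function.Injective (fromBlocksDiagonalMonoidHom : Matrix m m R × Matrix n n R →* _) :=
  fun p q h => by simpa [fromBlocksDiagonalMonoidHom, Prod.ext_iff] using h

lemma continuous_fromBlocksDiagonalMonoidHom [TopologicalSpace R] :
    Continuous (fromBlocksDiagonalMonoidHom : Matrix m m R × Matrix n n R →* _) :=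
  continuous_fst.matrix_fromBlocks continuous_const continuous_const continuous_snd

namespace GeneralLinearGroup

def blockSum : GL m R × GL n R →* GL (m ⊕ n) R :=
  (Units.map fromBlocksDiagonalMonoidHom).comp MulEquiv.prodUnits.symm.toMonoidHom

lemma blockSum_injective : Function.Injective (blockSum : GL m R × GL n R →* _) :=
  (Units.map_injective fromBlocksDiagonalMonoidHom_injective).comp
    MulEquiv.prodUnits.symm.injective

lemma continuous_blockSum [TopologicalSpace R] : Continuous (blockSum : GL m R × GL n R →* _) :=
  (Units.continuous_map continuous_fromBlocksDiagonalMonoidHom).comp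
    Homeomorph.prodUnits.symm.continuous

def reindex (e : m ≃ n) : GL m R ≃* GL n R :=
  Units.mapEquiv (reindexRingEquiv R e).toMulEquiv

lemma continuous_reindex [TopologicalSpace R] (e : m ≃ n) : Continuous (reindex (R := R) e) :=
  Units.continuous_map (f := (reindexRingEquiv R e).toMonoidHom)
    (continuous_id.matrix_reindex e e)

end GeneralLinearGroup
end Matrix

section Linearizer

open Matrix.GeneralLinearGroup

variable {S : Type*} [Group S] [TopologicalSpace S]

lemma mem_linearizer_iff {x : S} :
    x ∈ linearizer S ↔ ∀ (d : ℕ) (ρ : S →* GL (Fin d) ℝ), Continuous ρ → ρ x = 1 := by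
  simp [linearizer]

lemma linearizer_le_ker {d : ℕ} (ρ : S →* GL (Fin d) ℝ) (hρ : Continuous ρ) :
    linearizer S ≤ ρ.ker :=
  fun _ hx => mem_linearizer_iff.1 hx d ρ hρ

instance linearizer_normal : (linearizer S).Normal :=
  Subgroup.normal_iInf_normal fun _ => Subgroup.normal_iInf_normal fun ρ =>
    Subgroup.normal_iInf_normal fun _ => ρ.normal_ker

lemma exists_continuous_ker_eq_inf {d₁ d₂ : ℕ} (ρ₁ : S →* GL (Fin d₁) ℝ)
    (ρ₂ : S →* GL (Fin d₂) ℝ) (h₁ : Continuous ρ₁) (h₂ : Continuous ρ₂) :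
    ∃ (d : ℕ) (ρ : S →* GL (Fin d) ℝ), Continuous ρ ∧ ρ.ker = ρ₁.ker ⊓ ρ₂.ker :=
  ⟨d₁ + d₂, (reindex finSumFinEquiv).toMonoidHom.comp (blockSum.comp (ρ₁.prod ρ₂)),
    (continuous_reindex _).comp (continuous_blockSum.comp (h₁.prodMk h₂)), by
    rw [MonoidHom.ker_comp_of_injective _ (reindex finSumFinEquiv).toMonoidHom
        (reindex _).injective,
      MonoidHom.ker_comp_of_injective _ _ blockSum_injective, MonoidHom.ker_prod]⟩

lemma exists_continuous_disjoint_ker {F : Set S} (hF : F.Finite)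
    (hFΛ : Disjoint F (linearizer S)) :
    ∃ (d : ℕ) (τ : S →* GL (Fin d) ℝ), Continuous τ ∧ Disjoint F τ.ker := by
  induction F, hF using Set.Finite.induction_on with
  | empty => exact ⟨0, 1, continuous_const, Set.empty_disjoint _⟩
  | @insert z F _ _ ih =>
    rw [Set.disjoint_insert_left] at hFΛ
    obtain ⟨d, τ, hτ, hFτ⟩ := ih hFΛ.2
    obtain ⟨d', ρ, hρ, hρz⟩ : ∃ (d' : ℕ) (ρ : S →* GL (Fin d') ℝ), Continuous ρ ∧ ρ z ≠ 1 := by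
      simpa [mem_linearizer_iff] using hFΛ.1
    obtain ⟨e, σ, hσ, hker⟩ := exists_continuous_ker_eq_inf ρ τ hρ hτ
    refine ⟨e, σ, hσ, ?_⟩
    rw [hker, Set.disjoint_insert_left]
    exact ⟨fun h => hρz h.1, hFτ.mono_right inf_le_right⟩

lemma exists_continuous_ker_eq_linearizer {d : ℕ} (ρ : S →* GL (Fin d) ℝ) (hρ : Continuous ρ)
    (hfin : (ρ.ker : Set S).Finite) :
    ∃ (e : ℕ) (σ : S →* GL (Fin e) ℝ), Continuous σ ∧ σ.ker = linearizer S := by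
  obtain ⟨d', τ, hτ, hdisj⟩ :=
    exists_continuous_disjoint_ker (hfin.sdiff (t := linearizer S)) Set.disjoint_sdiff_left
  obtain ⟨e, σ, hσ, hker⟩ := exists_continuous_ker_eq_inf ρ τ hρ hτ
  refine ⟨e, σ, hσ, le_antisymm ?_ ?_⟩
  · rw [hker]
    rintro x ⟨hxρ, hxτ⟩
    by_contra hx
    exact Set.disjoint_left.1 hdisj ⟨hxρ, hx⟩ hxτ
  · exact hker ▸ le_inf (linearizer_le_ker ρ hρ) (linearizer_le_ker τ hτ)

end Linearizer

theorem linearizer_central_and_quotient_linear_general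
    {S : Type*} [Group S] [TopologicalSpace S]
    (hZ : Finite (Subgroup.center S))
    (d : ℕ) (ρ : S ⧸ Subgroup.center S →* GL (Fin d) ℝ)
    (hρinj : Function.Injective ρ) (hρcont : Continuous ρ) :
    linearizer S ≤ Subgroup.center S ∧
    ∃ hnorm : (linearizer S).Normal,
      letI := hnorm
      ∃ (e : ℕ) (σ : S ⧸ linearizer S →* GL (Fin e) ℝ),
        Function.Injective σ ∧ Continuous σ := by
  have hρS : Continuous (ρ.comp (QuotientGroup.mk' (Subgroup.center S))) :=
    hρcont.comp QuotientGroup.continuous_mk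
  have hker : (ρ.comp (QuotientGroup.mk' _)).ker = Subgroup.center S := by
    rw [MonoidHom.ker_comp_of_injective _ _ hρinj, QuotientGroup.ker_mk']
  obtain ⟨e, σ, hσ, hσker⟩ :=
    exists_continuous_ker_eq_linearizer _ hρS (by rw [hker]; exact Set.toFinite _)
  refine ⟨hker ▸ linearizer_le_ker _ hρS, inferInstance, e,
    QuotientGroup.lift _ σ hσker.ge, ?_, ?_⟩
  · exact (QuotientGroup.injective_lift_iff _ _ _).2 hσker.symm
  · exact (QuotientGroup.isQuotientMap_mk _).continuous_iff.2 hσ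

/-- Let `S` be a topological group with finite center such that `S/Z(S)`
admits a faithful continuous finite-dimensional real representation.  Then the linearizer
`Λ(S)` is contained in the center, and `S/Λ(S)` admits a faithful continuous
finite-dimensional real representation. -/
theorem linearizer_central_and_quotient_linear
    {S : Type*} [Group S] [TopologicalSpace S] [IsTopologicalGroup S]
    (hZ : Finite (Subgroup.center S))
    (d : ℕ) (ρ : S ⧸ Subgroup.center S →* GL (Fin d) ℝ)
    (hρinj : Function.Injective ρ) (hρcont : Continuous ρ) :
    linearizer S ≤ Subgroup.center S ∧
    ∃ hnorm : (linearizer S).Normal,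
      letI := hnorm
      ∃ (e : ℕ) (σ : S ⧸ linearizer S →* GL (Fin e) ℝ),
        Function.Injective σ ∧ Continuous σ :=
  linearizer_central_and_quotient_linear_general hZ d ρ hρinj hρcont
end
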